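/- Let K be a field, n a positive integer, and let the alternating group A_n act on the polynomial ring K[x_1, ..., x_n] by permuting the variables. Then K[x_1, ..., x_n]^{A_n} = K[s_1, ..., s_n][O_{A_n}(x_2 x_3^2 ⋯ x_n^{n−1})], i.e. the invariant ring is generated as a K-algebra by the n elementary symmetric polynomials together with the single orbit sum of the monomial x_1^0 x_2^1 x_3^2 ⋯ x_n^{n−1}. Consequently K[x_1, ..., x_n]^{A_n} is a hypersurface: its embedding dimension is at most its Krull dimension plus 1. -/

import Mathlib

noncomputable section

/-- The ring of invariants of a permutation group `G ≤ Sₙ` acting on the polynomial ring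
`K[x₁, …, xₙ]` by permuting the variables (`σ • xᵢ = x_{σ i}`). -/
def invSubalg (K : Type*) [CommSemiring K] {n : ℕ} (G : Subgroup (Equiv.Perm (Fin n))) :
    Subalgebra K (MvPolynomial (Fin n) K) where
  carrier := {p | ∀ g ∈ G, MvPolynomial.rename ⇑g p = p}
  mul_mem' := fun ha hb g hg => by rw [Set.mem_setOf_eq] at *; rw [map_mul, ha g hg, hb g hg]
  add_mem' := fun ha hb g hg => by rw [Set.mem_setOf_eq] at *; rw [map_add, ha g hg, hb g hg]
  one_mem' := fun g hg => map_one _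
  algebraMap_mem' := fun c g hg => MvPolynomial.rename_C _ c

open scoped Classical in
/-- The orbit sum of the monomial `x^I` under a permutation group `G`: the sum of the distinct
monomials in the `G`-orbit of `x^I`. -/
def orbitSum (K : Type*) [CommSemiring K] {n : ℕ} (G : Subgroup (Equiv.Perm (Fin n)))
    (I : Fin n →₀ ℕ) : MvPolynomial (Fin n) K :=
  ∑ J ∈ Finset.image (fun g : Equiv.Perm (Fin n) => Finsupp.mapDomain ⇑g I)
      (Finset.univ.filter (· ∈ G)), MvPolynomial.monomial J (1 : K)

open MvPolynomial Equiv Finset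

namespace AltInv

variable {K : Type*} [CommRing K] {n : ℕ}

/-- the staircase exponent -/
def stair (n : ℕ) : Fin n →₀ ℕ := Finsupp.equivFunOnFinite.symm fun i : Fin n => (i : ℕ)

lemma stair_apply (i : Fin n) : stair n i = (i : ℕ) := rfl

lemma stair_inj :
    Function.Injective fun g : Equiv.Perm (Fin n) => Finsupp.mapDomain ⇑g (stair n) := by
  intro g g' h
  dsimp only at h
  have : ∀ j, g.symm j = g'.symm j := by
    intro j
    have h' := Finsupp.ext_iff.mp h j
    rw [Finsupp.mapDomain_equiv_apply, Finsupp.mapDomain_equiv_apply, stair_apply, stair_apply]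
      at h'
    exact Fin.val_injective h'
  have h2 : g.symm = g'.symm := Equiv.ext this
  calc g = g.symm.symm := rfl
    _ = g'.symm.symm := by rw [h2]
    _ = g' := rfl

/-- sum of monomials over a set of permutations -/
def mSum (K : Type*) [CommRing K] {n : ℕ} (s : Finset (Equiv.Perm (Fin n))) :
    MvPolynomial (Fin n) K :=
  ∑ g ∈ s, MvPolynomial.monomial (Finsupp.mapDomain ⇑g (stair n)) (1 : K)

open scoped Classical in
lemma orbitSum_eq :
    orbitSum K (alternatingGroup (Fin n)) (stair n)
      = mSum K (Finset.univ.filter (· ∈ alternatingGroup (Fin n))) := by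
  rw [orbitSum, mSum]
  exact Finset.sum_image fun g _ g' _ h => stair_inj h

lemma rename_mSum (σ : Equiv.Perm (Fin n)) (s : Finset (Equiv.Perm (Fin n))) :
    rename ⇑σ (mSum K s) = mSum K (s.image (σ * ·)) := by
  classical
  rw [mSum, map_sum, mSum, Finset.sum_image (fun g _ g' _ h => mul_right_injective σ h)]
  refine Finset.sum_congr rfl fun g _ => ?_
  rw [rename_monomial, ← Finsupp.mapDomain_comp]
  rfl

open scoped Classical in
lemma image_filter_sign (σ : Equiv.Perm (Fin n)) (u : ℤˣ) :
    (Finset.univ.filter fun g : Equiv.Perm (Fin n) => Equiv.Perm.sign g = u).image (σ * ·)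
      = Finset.univ.filter fun g : Equiv.Perm (Fin n) => Equiv.Perm.sign g = Equiv.Perm.sign σ * u := by
  ext g
  simp only [Finset.mem_image, Finset.mem_filter, Finset.mem_univ, true_and]
  constructor
  · rintro ⟨h, hh, rfl⟩; rw [map_mul, hh]
  · intro hg
    refine ⟨σ⁻¹ * g, ?_, by group⟩
    rw [map_mul, hg, map_inv, ← mul_assoc, inv_mul_cancel, one_mul]

open scoped Classical in
/-- even part -/
def eE (K : Type*) [CommRing K] (n : ℕ) : MvPolynomial (Fin n) K :=
  mSum K (Finset.univ.filter fun g : Equiv.Perm (Fin n) => Equiv.Perm.sign g = 1)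

open scoped Classical in
/-- odd part -/
def oE (K : Type*) [CommRing K] (n : ℕ) : MvPolynomial (Fin n) K :=
  mSum K (Finset.univ.filter fun g : Equiv.Perm (Fin n) => Equiv.Perm.sign g = -1)

lemma orbitSum_eq_eE :
    orbitSum K (alternatingGroup (Fin n)) (stair n) = eE K n := by
  classical
  rw [orbitSum_eq, eE]
  congr 1
  exact Finset.filter_congr fun g _ => by
    simp [Equiv.Perm.mem_alternatingGroup]

lemma rename_eE_even {σ : Equiv.Perm (Fin n)} (hσ : Equiv.Perm.sign σ = 1) :
    rename ⇑σ (eE K n) = eE K n := by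
  classical
  rw [eE, rename_mSum, image_filter_sign, hσ, one_mul]

lemma rename_oE_even {σ : Equiv.Perm (Fin n)} (hσ : Equiv.Perm.sign σ = 1) :
    rename ⇑σ (oE K n) = oE K n := by
  classical
  rw [oE, rename_mSum, image_filter_sign, hσ, one_mul]

lemma rename_eE_odd {σ : Equiv.Perm (Fin n)} (hσ : Equiv.Perm.sign σ = -1) :
    rename ⇑σ (eE K n) = oE K n := by
  classical
  rw [eE, rename_mSum, image_filter_sign, hσ, oE, mul_one]

lemma rename_oE_odd {σ : Equiv.Perm (Fin n)} (hσ : Equiv.Perm.sign σ = -1) :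
    rename ⇑σ (oE K n) = eE K n := by
  classical
  rw [oE, rename_mSum, image_filter_sign, hσ, eE]
  norm_num

end AltInv

namespace AltInv

variable {K : Type*} [CommRing K] {n : ℕ}

lemma monomial_perm_stair (σ : Equiv.Perm (Fin n)) :
    (MvPolynomial.monomial (Finsupp.mapDomain ⇑σ (stair n)) (1 : K))
      = ∏ i : Fin n, (X (σ i) : MvPolynomial (Fin n) K) ^ (i : ℕ) := by
  rw [← rename_monomial, monomial_eq, C_1, one_mul,
    Finsupp.prod_fintype _ _ (fun i => pow_zero _), map_prod]
  refine Finset.prod_congr rfl fun i _ => ?_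
  rw [map_pow, rename_X]
  rfl

/-- the Vandermonde product -/
def vdm (K : Type*) [CommRing K] (n : ℕ) : MvPolynomial (Fin n) K :=
  ∏ i : Fin n, ∏ j ∈ Finset.Ioi i, (X j - X i)

lemma eE_sub_oE : eE K n - oE K n = vdm K n := by
  classical
  rw [vdm, ← Matrix.det_vandermonde fun i : Fin n => (X i : MvPolynomial (Fin n) K),
    Matrix.det_apply]
  have : ∀ σ : Equiv.Perm (Fin n),
      (Equiv.Perm.sign σ • ∏ i : Fin n, Matrix.vandermonde (fun i : Fin n => (X i : MvPolynomial (Fin n) K)) (σ i) i)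
        = Equiv.Perm.sign σ • (MvPolynomial.monomial (Finsupp.mapDomain ⇑σ (stair n)) (1 : K)) := by
    intro σ
    congr 1
    rw [monomial_perm_stair]
    rfl
  rw [Finset.sum_congr rfl fun σ _ => this σ,
    ← Finset.sum_filter_add_sum_filter_not Finset.univ
      (fun σ : Equiv.Perm (Fin n) => Equiv.Perm.sign σ = 1)]
  have h1 : ∀ σ ∈ Finset.univ.filter
      (fun σ : Equiv.Perm (Fin n) => Equiv.Perm.sign σ = 1),
      (Equiv.Perm.sign σ • (MvPolynomial.monomial (Finsupp.mapDomain ⇑σ (stair n)) (1 : K)))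
        = MvPolynomial.monomial (Finsupp.mapDomain ⇑σ (stair n)) (1 : K) := by
    intro σ hσ
    rw [Finset.mem_filter] at hσ
    rw [hσ.2, one_smul]
  have h2 : ∀ σ ∈ Finset.univ.filter
      (fun σ : Equiv.Perm (Fin n) => ¬ Equiv.Perm.sign σ = 1),
      (Equiv.Perm.sign σ • (MvPolynomial.monomial (Finsupp.mapDomain ⇑σ (stair n)) (1 : K)))
        = - MvPolynomial.monomial (Finsupp.mapDomain ⇑σ (stair n)) (1 : K) := by
    intro σ hσ
    rw [Finset.mem_filter] at hσ
    have := (Int.units_eq_one_or (Equiv.Perm.sign σ)).resolve_left hσ.2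
    rw [this, Units.neg_smul, one_smul]
  rw [Finset.sum_congr rfl h1, Finset.sum_congr rfl h2, Finset.sum_neg_distrib]
  have h3 : (Finset.univ.filter fun σ : Equiv.Perm (Fin n) => ¬ Equiv.Perm.sign σ = 1)
      = Finset.univ.filter fun σ : Equiv.Perm (Fin n) => Equiv.Perm.sign σ = -1 := by
    refine Finset.filter_congr fun σ _ => ?_
    constructor
    · exact fun h => (Int.units_eq_one_or (Equiv.Perm.sign σ)).resolve_left h
    · intro h h1; rw [h1] at h; exact absurd h (by decide)
  rw [h3, eE, oE, mSum, mSum, sub_eq_add_neg]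

end AltInv

namespace AltInv

variable {K : Type*} [CommRing K] {n : ℕ}

/-- substitution sending `X i` to `X j` -/
def subst (K : Type*) [CommRing K] {n : ℕ} (i j : Fin n) :
    MvPolynomial (Fin n) K →ₐ[K] MvPolynomial (Fin n) K :=
  aeval (Function.update X i (X j))

lemma sub_dvd (i j : Fin n) (p : MvPolynomial (Fin n) K) :
    (X i - X j) ∣ (p - subst K i j p) := by
  induction p using MvPolynomial.induction_on with
  | C r => rw [subst, aeval_C, algebraMap_eq, sub_self]; exact dvd_zero _
  | add p q hp hq =>
      rw [map_add]
      have : p + q - (subst K i j p + subst K i j q)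
          = (p - subst K i j p) + (q - subst K i j q) := by ring
      rw [this]; exact dvd_add hp hq
  | mul_X p k hp =>
      rw [map_mul, subst, aeval_X, ← subst]
      have : p * X k - subst K i j p * Function.update X i (X j) k
          = p * (X k - Function.update X i (X j) k)
            + (p - subst K i j p) * Function.update X i (X j) k := by ring
      rw [this]
      refine dvd_add (Dvd.dvd.mul_left ?_ p) (hp.mul_right _)
      by_cases hk : k = i
      · subst hk; rw [Function.update_self]
      · rw [Function.update_of_ne hk, sub_self]; exact dvd_zero _

lemma subst_X_sub_X (i j : Fin n) (h : i ≠ j) :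
    subst K i j (X i - X j) = 0 := by
  rw [map_sub, subst, aeval_X, aeval_X, Function.update_self,
    Function.update_of_ne (Ne.symm h), sub_self]

lemma ker_subst (i j : Fin n) (h : i ≠ j) :
    RingHom.ker (subst K i j) = Ideal.span {X i - X j} := by
  refine le_antisymm ?_ ?_
  · intro p hp
    rw [RingHom.mem_ker] at hp
    rw [Ideal.mem_span_singleton]
    have := sub_dvd (K := K) i j p
    rwa [hp, sub_zero] at this
  · rw [Ideal.span_le, Set.singleton_subset_iff]
    exact subst_X_sub_X i j h

lemma prime_X_sub_X {K : Type*} [Field K] (i j : Fin n) (h : i ≠ j) :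
    Prime (X i - X j : MvPolynomial (Fin n) K) := by
  have h0 : (X i - X j : MvPolynomial (Fin n) K) ≠ 0 :=
    sub_ne_zero.mpr fun hc => h (X_injective hc)
  rw [← Ideal.span_singleton_prime h0, ← ker_subst i j h]
  exact RingHom.ker_isPrime _

/-- pairwise non-associated primes dividing an element: their product divides it -/
lemma prod_primes_dvd {R : Type*} [CommRing R] [IsDomain R] {ι : Type*} (s : Finset ι)
    (f : ι → R) (hp : ∀ i ∈ s, Prime (f i)) (hna : ∀ i ∈ s, ∀ j ∈ s, i ≠ j → ¬ Associated (f i) (f j))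
    {m : R} (hd : ∀ i ∈ s, f i ∣ m) : (∏ i ∈ s, f i) ∣ m := by
  classical
  induction s using Finset.induction_on generalizing m with
  | empty => simpa using one_dvd m
  | @insert a s ha ih =>
      obtain ⟨m', rfl⟩ := hd a (Finset.mem_insert_self a s)
      rw [Finset.prod_insert ha]
      refine mul_dvd_mul_left _ (ih (fun i hi => hp i (Finset.mem_insert_of_mem hi))
        (fun i hi j hj hij => hna i (Finset.mem_insert_of_mem hi) j (Finset.mem_insert_of_mem hj) hij)
        (fun i hi => ?_))
      have hdi := hd i (Finset.mem_insert_of_mem hi)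
      rcases (hp i (Finset.mem_insert_of_mem hi)).2.2 _ _ hdi with h1 | h1
      · exfalso
        refine hna i (Finset.mem_insert_of_mem hi) a (Finset.mem_insert_self a s)
          (fun e => ha (e ▸ hi)) ?_
        exact Prime.associated_of_dvd (hp i (Finset.mem_insert_of_mem hi))
          (hp a (Finset.mem_insert_self a s)) h1
      · exact h1

end AltInv

namespace AltInv

variable {K : Type*} [Field K] {n : ℕ}

lemma nonassoc {a b c d : Fin n} (hab : a < b) (hcd : c < d) (hne : (a, b) ≠ (c, d)) :
    ¬ Associated (X b - X a : MvPolynomial (Fin n) K) (X d - X c) := by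
  intro hA
  have hdvd : (X b - X a : MvPolynomial (Fin n) K) ∣ (X d - X c) := hA.dvd
  have hw : (c ≠ a ∧ c ≠ b) ∨ (d ≠ a ∧ d ≠ b) := by
    by_cases h1 : c = a
    · subst h1
      exact Or.inr ⟨hcd.ne', fun h2 => hne (by rw [h2])⟩
    · by_cases h3 : c = b
      · subst h3
        exact Or.inr ⟨(hab.trans hcd).ne', hcd.ne'⟩
      · exact Or.inl ⟨h1, h3⟩
  obtain ⟨hca, hcb⟩ | ⟨hda, hdb⟩ := hw
  · set v : Fin n → K := fun t => if t = c then 1 else 0 with hv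
    have hbc : b ≠ c := fun h => hcb h.symm
    have hac : a ≠ c := fun h => hca h.symm
    have h0 : eval v (X b - X a : MvPolynomial (Fin n) K) = 0 := by
      simp [hv, hbc, hac]
    have h1 : eval v (X d - X c : MvPolynomial (Fin n) K) ≠ 0 := by
      simp [hv, if_neg hcd.ne', if_pos rfl]
    have := map_dvd (eval v) hdvd
    rw [h0, zero_dvd_iff] at this
    exact h1 this
  · set v : Fin n → K := fun t => if t = d then 1 else 0 with hv
    have hbd : b ≠ d := fun h => hdb h.symm
    have had : a ≠ d := fun h => hda h.symm
    have h0 : eval v (X b - X a : MvPolynomial (Fin n) K) = 0 := by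
      simp [hv, hbd, had]
    have h1 : eval v (X d - X c : MvPolynomial (Fin n) K) ≠ 0 := by
      simp [hv, if_pos rfl, if_neg hcd.ne]
    have := map_dvd (eval v) hdvd
    rw [h0, zero_dvd_iff] at this
    exact h1 this

lemma vdm_dvd {h : MvPolynomial (Fin n) K}
    (hdvd : ∀ i j : Fin n, i ≠ j → (X i - X j) ∣ h) : vdm K n ∣ h := by
  classical
  have heq : vdm K n
      = ∏ x ∈ Finset.univ.sigma (fun i : Fin n => Finset.Ioi i), (X x.2 - X x.1) := by
    rw [vdm, Finset.prod_sigma]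
  rw [heq]
  refine prod_primes_dvd _ _ ?_ ?_ ?_
  · intro x hx
    rw [Finset.mem_sigma, Finset.mem_Ioi] at hx
    exact prime_X_sub_X x.2 x.1 hx.2.ne'
  · intro x hx y hy hxy
    rw [Finset.mem_sigma, Finset.mem_Ioi] at hx hy
    refine nonassoc hx.2 hy.2 fun hc => hxy ?_
    obtain ⟨h1, h2⟩ := Prod.ext_iff.mp hc
    exact Sigma.ext h1 (heq_of_eq h2)
  · intro x hx
    rw [Finset.mem_sigma, Finset.mem_Ioi] at hx
    exact hdvd x.2 x.1 hx.2.ne'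

lemma vdm_ne_zero : (vdm K n) ≠ 0 := by
  rw [vdm]
  refine Finset.prod_ne_zero_iff.mpr fun i _ => Finset.prod_ne_zero_iff.mpr fun j hj => ?_
  rw [Finset.mem_Ioi] at hj
  exact sub_ne_zero.mpr fun hc => hj.ne' (X_injective hc)

end AltInv

namespace AltInv

variable {K : Type*} [Field K] {n : ℕ}

lemma rename_perm_mul (σ τ : Equiv.Perm (Fin n)) (p : MvPolynomial (Fin n) K) :
    rename ⇑(σ * τ) p = rename ⇑σ (rename ⇑τ p) := by
  rw [rename_rename]; rfl

lemma key (hn2 : 2 ≤ n) {f : MvPolynomial (Fin n) K}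
    (hf : f ∈ invSubalg K (alternatingGroup (Fin n))) :
    ∃ w q : MvPolynomial (Fin n) K, w.IsSymmetric ∧ q.IsSymmetric ∧ f = w + q * eE K n := by
  classical
  have hf' : ∀ σ : Equiv.Perm (Fin n), Equiv.Perm.sign σ = 1 → rename ⇑σ f = f :=
    fun σ h => hf σ (Equiv.Perm.mem_alternatingGroup.mpr h)
  set i0 : Fin n := ⟨0, by omega⟩ with hi0
  set j0 : Fin n := ⟨1, by omega⟩ with hj0
  have hij : i0 ≠ j0 := Fin.ne_of_val_ne (show (0:ℕ) ≠ 1 by omega)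
  set τ : Equiv.Perm (Fin n) := Equiv.swap i0 j0 with hτdef
  have hτ : Equiv.Perm.sign τ = -1 := Equiv.Perm.sign_swap hij
  set g : MvPolynomial (Fin n) K := rename ⇑τ f with hgdef
  have hodd : ∀ σ : Equiv.Perm (Fin n), Equiv.Perm.sign σ = -1 → rename ⇑σ f = g := by
    intro σ hσ
    have h1 : Equiv.Perm.sign (τ⁻¹ * σ) = 1 := by
      rw [map_mul, map_inv, hτ, hσ]; decide
    calc rename ⇑σ f = rename ⇑(τ * (τ⁻¹ * σ)) f := by rw [mul_inv_cancel_left]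
      _ = rename ⇑τ (rename ⇑(τ⁻¹ * σ) f) := rename_perm_mul _ _ _
      _ = g := by rw [hf' _ h1]
  have hgodd : ∀ σ : Equiv.Perm (Fin n), Equiv.Perm.sign σ = -1 → rename ⇑σ g = f := by
    intro σ hσ
    rw [hgdef, ← rename_perm_mul]
    exact hf' _ (by rw [map_mul, hσ, hτ]; decide)
  have hgeven : ∀ σ : Equiv.Perm (Fin n), Equiv.Perm.sign σ = 1 → rename ⇑σ g = g := by
    intro σ hσ
    rw [hgdef, ← rename_perm_mul]
    exact hodd _ (by rw [map_mul, hσ, hτ]; decide)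
  set h : MvPolynomial (Fin n) K := f - g with hhdef
  have hdvd : ∀ i j : Fin n, i ≠ j → (X i - X j) ∣ h := by
    intro i j hij'
    have hswap : rename ⇑(Equiv.swap i j) f = g := hodd _ (Equiv.Perm.sign_swap hij')
    have hsub0 : subst K i j h = 0 := by
      rw [hhdef, map_sub]
      have hcomp : subst K i j g = subst K i j f := by
        rw [← hswap, subst, aeval_rename]
        have hfun : Function.update X i (X j) ∘ ⇑(Equiv.swap i j)
            = (Function.update X i (X j) : Fin n → MvPolynomial (Fin n) K) := by
          funext t
          by_cases hti : t = i
          · subst hti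
            rw [Function.comp_apply, Equiv.swap_apply_left, Function.update_self,
              Function.update_of_ne (Ne.symm hij')]
          · by_cases htj : t = j
            · subst htj
              rw [Function.comp_apply, Equiv.swap_apply_right, Function.update_self,
                Function.update_of_ne (Ne.symm hij')]
            · rw [Function.comp_apply, Equiv.swap_apply_of_ne_of_ne hti htj]
        rw [hfun]
      rw [hcomp, sub_self]
    have := sub_dvd (K := K) i j h
    rwa [hsub0, sub_zero] at this
  obtain ⟨q, hq⟩ := vdm_dvd hdvd
  have hrh_even : ∀ σ : Equiv.Perm (Fin n), Equiv.Perm.sign σ = 1 → rename ⇑σ h = h := by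
    intro σ hσ
    rw [hhdef, map_sub, hf' σ hσ, hgeven σ hσ]
  have hrh_odd : ∀ σ : Equiv.Perm (Fin n), Equiv.Perm.sign σ = -1 → rename ⇑σ h = -h := by
    intro σ hσ
    rw [hhdef, map_sub, hodd σ hσ, hgodd σ hσ, neg_sub]
  have hveq : eE K n - oE K n = vdm K n := eE_sub_oE
  have hq_sym : q.IsSymmetric := by
    intro σ
    rcases Int.units_eq_one_or (Equiv.Perm.sign σ) with hσ | hσ
    · have hEq := congrArg (rename ⇑σ) hq
      rw [hrh_even σ hσ, map_mul, ← hveq, map_sub, rename_eE_even hσ, rename_oE_even hσ, hveq,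
        hq] at hEq
      exact (mul_left_cancel₀ vdm_ne_zero hEq.symm)
    · have hEq := congrArg (rename ⇑σ) hq
      rw [hrh_odd σ hσ, map_mul, ← hveq, map_sub, rename_eE_odd hσ, rename_oE_odd hσ, hq] at hEq
      have : vdm K n * q = vdm K n * rename ⇑σ q := by
        have := hEq
        rw [← hveq] at this ⊢
        linear_combination -this
      exact (mul_left_cancel₀ vdm_ne_zero this).symm
  refine ⟨f - q * eE K n, q, ?_, hq_sym, by ring⟩
  intro σ
  rcases Int.units_eq_one_or (Equiv.Perm.sign σ) with hσ | hσ
  · rw [map_sub, map_mul, hf' σ hσ, hq_sym σ, rename_eE_even hσ]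
  · rw [map_sub, map_mul, hodd σ hσ, hq_sym σ, rename_eE_odd hσ]
    have hh : f - g = vdm K n * q := hq
    linear_combination -hh + q * hveq

end AltInv

namespace AltInv

variable {K : Type*} [Field K] {n : ℕ}

lemma symmetric_mem_adjoin {p : MvPolynomial (Fin n) K} (hp : p.IsSymmetric) :
    p ∈ Algebra.adjoin K
      (Set.range fun i : Fin n => MvPolynomial.esymm (Fin n) K ((i : ℕ) + 1)) := by
  obtain ⟨q, hq⟩ := esymmAlgHom_surjective (σ := Fin n) K (le_of_eq (Fintype.card_fin n))
    ⟨p, (mem_symmetricSubalgebra _).mpr hp⟩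
  have hq' : p = aeval (fun i : Fin n => MvPolynomial.esymm (Fin n) K ((i : ℕ) + 1)) q := by
    have := congrArg Subtype.val hq
    rw [esymmAlgHom_apply] at this
    exact this.symm
  rw [Algebra.adjoin_range_eq_range_aeval]
  exact ⟨q, hq'.symm⟩

/-- generator set -/
def genSet (K : Type*) [Field K] (n : ℕ) : Set (MvPolynomial (Fin n) K) :=
  (Set.range fun i : Fin n => MvPolynomial.esymm (Fin n) K ((i : ℕ) + 1)) ∪
    {orbitSum K (alternatingGroup (Fin n))
      (Finsupp.equivFunOnFinite.symm fun i : Fin n => (i : ℕ))}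

lemma part_one (hn : 0 < n) :
    invSubalg K (alternatingGroup (Fin n)) = Algebra.adjoin K (genSet K n) := by
  classical
  have hOS : orbitSum K (alternatingGroup (Fin n))
      (Finsupp.equivFunOnFinite.symm fun i : Fin n => (i : ℕ)) = eE K n := orbitSum_eq_eE
  refine le_antisymm ?_ ?_
  · -- hard direction
    intro f hf
    rcases lt_or_ge n 2 with hn2 | hn2
    · -- n = 1 : everything is symmetric
      have hsym : f.IsSymmetric := by
        intro σ
        have hσ : σ = 1 := by
          ext x
          have h1 : ((σ x : Fin n) : ℕ) = 0 := by omega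
          have h2 : (((1 : Equiv.Perm (Fin n)) x : Fin n) : ℕ) = 0 := by omega
          rw [h1, h2]
        rw [hσ]
        simp [MvPolynomial.rename_id]
      exact Algebra.adjoin_mono Set.subset_union_left (symmetric_mem_adjoin hsym)
    · obtain ⟨w, q, hw, hq, hfeq⟩ := key hn2 hf
      rw [hfeq]
      refine Subalgebra.add_mem _
        (Algebra.adjoin_mono Set.subset_union_left (symmetric_mem_adjoin hw))
        (Subalgebra.mul_mem _
          (Algebra.adjoin_mono Set.subset_union_left (symmetric_mem_adjoin hq)) ?_)
      rw [← hOS]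
      exact Algebra.subset_adjoin (Set.mem_union_right _ rfl)
  · refine Algebra.adjoin_le ?_
    rintro p (⟨i, rfl⟩ | hp)
    · exact fun g _ => MvPolynomial.esymm_isSymmetric (Fin n) K _ g
    · rw [Set.mem_singleton_iff] at hp
      subst hp
      intro g hg
      rw [hOS]
      exact rename_eE_even (Equiv.Perm.mem_alternatingGroup.mp hg)

end AltInv

namespace AltInv

variable {K : Type*} [Field K] {n : ℕ}

/-- the characteristic polynomial `∏ (T - X i)` -/
def charPoly (K : Type*) [Field K] (n : ℕ) : Polynomial (MvPolynomial (Fin n) K) :=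
  ∏ i : Fin n, (Polynomial.X - Polynomial.C (MvPolynomial.X i))

lemma charPoly_monic : (charPoly K n).Monic :=
  Polynomial.monic_prod_of_monic _ _ fun i _ => Polynomial.monic_X_sub_C _

lemma map_rename_charPoly (g : Equiv.Perm (Fin n)) :
    Polynomial.map (MvPolynomial.rename ⇑g).toRingHom (charPoly K n) = charPoly K n := by
  rw [charPoly, Polynomial.map_prod]
  calc ∏ i : Fin n, Polynomial.map (MvPolynomial.rename ⇑g).toRingHom
        (Polynomial.X - Polynomial.C (MvPolynomial.X i))
      = ∏ i : Fin n, (Polynomial.X - Polynomial.C (MvPolynomial.X (g i))) :=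
        Finset.prod_congr rfl fun i _ => by simp
    _ = ∏ i : Fin n, (Polynomial.X - Polynomial.C (MvPolynomial.X i)) :=
        Equiv.prod_comp g fun j => Polynomial.X - Polynomial.C (MvPolynomial.X j)

lemma coeff_charPoly_mem_inv (j : ℕ) :
    (charPoly K n).coeff j ∈ invSubalg K (alternatingGroup (Fin n)) := by
  intro g _
  have := congrArg (fun p => Polynomial.coeff p j) (map_rename_charPoly (K := K) g)
  simpa [Polynomial.coeff_map] using this

lemma X_isIntegral (k : Fin n) :
    IsIntegral (↥(invSubalg K (alternatingGroup (Fin n)))) (MvPolynomial.X k :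
      MvPolynomial (Fin n) K) := by
  classical
  set Inv := invSubalg K (alternatingGroup (Fin n)) with hInv
  have hc : ↑(charPoly K n).coeffs ⊆ (Inv.toSubring : Set (MvPolynomial (Fin n) K)) := by
    intro c hc
    rw [Finset.mem_coe, Polynomial.mem_coeffs_iff] at hc
    obtain ⟨j, _, rfl⟩ := hc
    exact coeff_charPoly_mem_inv j
  set q0 := (charPoly K n).toSubring Inv.toSubring hc with hq0
  let e : ↥Inv.toSubring →+* ↥Inv :=
    { toFun := fun x => ⟨x.1, x.2⟩
      map_one' := rfl
      map_mul' := fun _ _ => rfl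
      map_zero' := rfl
      map_add' := fun _ _ => rfl }
  refine ⟨q0.map e, ((Polynomial.monic_toSubring _ _ _).mpr charPoly_monic).map e, ?_⟩
  have hcomp : (algebraMap (↥Inv) (MvPolynomial (Fin n) K)).comp e = Inv.toSubring.subtype :=
    RingHom.ext fun x => rfl
  rw [Polynomial.eval₂_map, hcomp, ← Polynomial.eval_map, Polynomial.map_toSubring]
  rw [charPoly, Polynomial.eval_prod]
  refine Finset.prod_eq_zero (Finset.mem_univ k) ?_
  rw [Polynomial.eval_sub, Polynomial.eval_X, Polynomial.eval_C, sub_self]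

/-- vanishing substitutions -/
def psi (K : Type*) [Field K] {n : ℕ} (k : ℕ) :
    MvPolynomial (Fin n) K →ₐ[K] MvPolynomial (Fin n) K :=
  aeval fun i : Fin n => if (i : ℕ) < k then 0 else MvPolynomial.X i

/-- the prime chain upstairs -/
def Q (K : Type*) [Field K] {n : ℕ} (k : ℕ) : Ideal (MvPolynomial (Fin n) K) :=
  RingHom.ker (psi K (n := n) k)

instance Q_isPrime (k : ℕ) : (Q K (n := n) k).IsPrime := RingHom.ker_isPrime _

lemma Q_mono {k k' : ℕ} (h : k ≤ k') : Q K (n := n) k ≤ Q K (n := n) k' := by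
  intro p hp
  rw [Q, RingHom.mem_ker] at hp ⊢
  have hcomp : (psi K (n := n) k').comp (psi K (n := n) k) = psi K (n := n) k' := by
    refine MvPolynomial.algHom_ext fun i => ?_
    simp only [AlgHom.comp_apply, psi, aeval_X]
    by_cases hik : (i : ℕ) < k
    · rw [if_pos hik, map_zero, if_pos (lt_of_lt_of_le hik h)]
    · rw [if_neg hik, aeval_X]
  calc psi K k' p = (psi K k').comp (psi K k) p := by rw [hcomp]
    _ = psi K k' (psi K k p) := rfl
    _ = 0 := by rw [hp, map_zero]

lemma X_mem_Q_succ (k : Fin n) : (MvPolynomial.X k : MvPolynomial (Fin n) K) ∈ Q K ((k : ℕ) + 1) := by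
  rw [Q, RingHom.mem_ker, psi, aeval_X, if_pos (Nat.lt_succ_self _)]

lemma X_not_mem_Q (k : Fin n) : (MvPolynomial.X k : MvPolynomial (Fin n) K) ∉ Q K (k : ℕ) := by
  rw [Q, RingHom.mem_ker, psi, aeval_X, if_neg (lt_irrefl _)]
  exact MvPolynomial.X_ne_zero _

end AltInv

namespace AltInv

variable {K : Type*} [Field K] {n : ℕ}

lemma comap_Q_lt (k : Fin n) :
    Ideal.comap (algebraMap (↥(invSubalg K (alternatingGroup (Fin n))))
        (MvPolynomial (Fin n) K)) (Q K (k : ℕ))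
      < Ideal.comap (algebraMap (↥(invSubalg K (alternatingGroup (Fin n))))
        (MvPolynomial (Fin n) K)) (Q K ((k : ℕ) + 1)) := by
  refine Ideal.comap_lt_comap_of_integral_mem_sdiff (Q_mono (Nat.le_succ _))
    ⟨X_mem_Q_succ k, X_not_mem_Q k⟩ (X_isIntegral k)

lemma krullDim_ge :
    (n : WithBot (WithTop ℕ)) ≤ ringKrullDim (↥(invSubalg K (alternatingGroup (Fin n)))) := by
  let P : Fin (n + 1) → PrimeSpectrum (↥(invSubalg K (alternatingGroup (Fin n)))) :=
    fun k => ⟨Ideal.comap (algebraMap (↥(invSubalg K (alternatingGroup (Fin n))))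
      (MvPolynomial (Fin n) K)) (Q K (k : ℕ)), Ideal.IsPrime.comap _⟩
  have hstep : ∀ k : Fin n, P k.castSucc < P k.succ := by
    intro k
    have : ((k.succ : Fin (n+1)) : ℕ) = (k : ℕ) + 1 := rfl
    rw [← PrimeSpectrum.asIdeal_lt_asIdeal]
    show Ideal.comap _ (Q K ((k.castSucc : Fin (n+1)) : ℕ)) < Ideal.comap _ (Q K ((k.succ : Fin (n+1)) : ℕ))
    rw [this]
    have h2 : ((k.castSucc : Fin (n+1)) : ℕ) = (k : ℕ) := rfl
    rw [h2]
    exact comap_Q_lt k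
  let c : LTSeries (PrimeSpectrum (↥(invSubalg K (alternatingGroup (Fin n))))) :=
    ⟨n, P, hstep⟩
  have := Order.LTSeries.length_le_krullDim c
  exact this

end AltInv


open AltInv in
/-- Gobel-type theorem for the alternating group: the invariant ring `K[x₁, …, xₙ]^{Aₙ}` is
generated as a `K`-algebra by the elementary symmetric polynomials `s₁, …, sₙ` together with
the single orbit sum of the monomial `x₂ x₃² ⋯ xₙ^{n-1}`.  Consequently it is a hypersurface:
it admits a generating set whose cardinality (the embedding dimension) is at most its Krull
dimension plus one. -/
theorem alternating_invariants_hypersurface (K : Type*) [Field K] (n : ℕ) (hn : 0 < n) :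
    invSubalg K (alternatingGroup (Fin n)) =
      Algebra.adjoin K
        ((Set.range fun i : Fin n => MvPolynomial.esymm (Fin n) K ((i : ℕ) + 1)) ∪
          {orbitSum K (alternatingGroup (Fin n))
            (Finsupp.equivFunOnFinite.symm fun i : Fin n => (i : ℕ))}) ∧
    ∃ s : Finset (MvPolynomial (Fin n) K),
      Algebra.adjoin K (s : Set (MvPolynomial (Fin n) K)) = invSubalg K (alternatingGroup (Fin n)) ∧
      (s.card : WithBot ℕ∞) ≤ ringKrullDim (invSubalg K (alternatingGroup (Fin n))) + 1 := by

  classical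
  have h1 : invSubalg K (alternatingGroup (Fin n)) = Algebra.adjoin K (genSet K n) :=
    part_one hn
  refine ⟨h1, ?_⟩
  refine ⟨(Finset.univ.image fun i : Fin n => MvPolynomial.esymm (Fin n) K ((i : ℕ) + 1)) ∪
    {orbitSum K (alternatingGroup (Fin n))
      (Finsupp.equivFunOnFinite.symm fun i : Fin n => (i : ℕ))}, ?_, ?_⟩
  · rw [h1]
    congr 1
    rw [Finset.coe_union, Finset.coe_image, Finset.coe_univ, Set.image_univ,
      Finset.coe_singleton]
    rfl
  · have hcard : ((Finset.univ.image fun i : Fin n => MvPolynomial.esymm (Fin n) K ((i : ℕ) + 1)) ∪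
        {orbitSum K (alternatingGroup (Fin n))
          (Finsupp.equivFunOnFinite.symm fun i : Fin n => (i : ℕ))}).card ≤ n + 1 := by
      refine le_trans (Finset.card_union_le _ _) ?_
      have := Finset.card_image_le (s := (Finset.univ : Finset (Fin n)))
        (f := fun i : Fin n => MvPolynomial.esymm (Fin n) K ((i : ℕ) + 1))
      simp only [Finset.card_univ, Fintype.card_fin] at this
      simpa using Nat.add_le_add this (le_refl 1)
    have hdim : (n : WithBot ℕ∞) ≤
        ringKrullDim (↥(invSubalg K (alternatingGroup (Fin n)))) := krullDim_ge
    calc ((((Finset.univ.image fun i : Fin n => MvPolynomial.esymm (Fin n) K ((i : ℕ) + 1)) ∪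
        {orbitSum K (alternatingGroup (Fin n))
          (Finsupp.equivFunOnFinite.symm fun i : Fin n => (i : ℕ))}).card : ℕ) :
          WithBot ℕ∞)
        ≤ ((n + 1 : ℕ) : WithBot ℕ∞) := Nat.mono_cast hcard
      _ = (n : WithBot ℕ∞) + 1 := by push_cast; rfl
      _ ≤ ringKrullDim (invSubalg K (alternatingGroup (Fin n))) + 1 :=
          add_le_add_left hdim 1
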